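/- arXiv:2311.05977 — 6 statements merged into one kernel-verified Lean document; each statement's English description precedes it below -/
import Mathlib

section
/- Suppose the liquidation functions satisfy γ-monotonicity and the inverse demand function F satisfies F-monotonicity. Then the clearing map Φ is monotone: for all (p¹,q¹,M¹), (p²,q²,M²) ∈ [0,p̄] × ℝ^m_+ × ℝ^n_+ with (p¹,q¹,M¹) ≥ (p²,q²,M²) componentwise, Φ(p¹,q¹,M¹) ≥ Φ(p²,q²,M²) componentwise. -/
open Finset

/-- Transpose-multiplication: `(A^T p)_i = ∑_j A_{ji} p_j`. -/
noncomputable def ATmul {n : ℕ} (A : Matrix (Fin n) (Fin n) ℝ) (p : Fin n → ℝ) : Fin n → ℝ :=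
  fun i => ∑ j, A j i * p j

/-- The clearing map `Φ(p,q,M) = (p̄ ∧ (x + S q + A^T p), F(∑_i γ_i(p,q), M), (x + A^T p − p̄)^+)`. -/
noncomputable def clearingMap {n m : ℕ} (x : Fin n → ℝ) (S : Matrix (Fin n) (Fin m) ℝ)
    (A : Matrix (Fin n) (Fin n) ℝ) (pbar : Fin n → ℝ)
    (γ : Fin n → (Fin n → ℝ) → (Fin m → ℝ) → (Fin m → ℝ))
    (F : (Fin m → ℝ) → (Fin n → ℝ) → (Fin m → ℝ))
    (p : Fin n → ℝ) (q : Fin m → ℝ) (M : Fin n → ℝ) :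
    (Fin n → ℝ) × (Fin m → ℝ) × (Fin n → ℝ) :=
  (fun i => min (pbar i) (x i + (∑ k, S i k * q k) + ATmul A p i),
   F (fun k => ∑ i, γ i p q k) M,
   fun i => max (x i + ATmul A p i - pbar i) 0)

/-- The maximal market liquidity `M̄ = (x + A^T p̄ − p̄)^+`. -/
noncomputable def Mbar {n : ℕ} (x : Fin n → ℝ) (A : Matrix (Fin n) (Fin n) ℝ)
    (pbar : Fin n → ℝ) : Fin n → ℝ :=
  fun i => max (x i + ATmul A pbar i - pbar i) 0

-- `ATmul A p i` and `∑ k, S i k * q k` are dot products definitionally, with nonnegative weights.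
theorem ATmul_mono {n : ℕ} {A : Matrix (Fin n) (Fin n) ℝ} (hA : ∀ i j, 0 ≤ A i j) :
    Monotone (ATmul A) :=
  fun _ _ hp i => dotProduct_le_dotProduct_of_nonneg_left hp fun j => hA j i

theorem le_of_antitone_left_of_monotone_right {α β δ : Type*} [Preorder α] [Zero α] [Preorder β]
    [Zero β] [Preorder δ] {F : α → β → δ}
    (hFθ : ∀ θ₁ θ₂ M, 0 ≤ θ₂ → θ₂ ≤ θ₁ → 0 ≤ M → F θ₁ M ≤ F θ₂ M)
    (hFM : ∀ θ M₁ M₂, 0 ≤ θ → 0 ≤ M₁ → M₁ ≤ M₂ → F θ M₁ ≤ F θ M₂)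
    {θ₁ θ₂ : α} {M₁ M₂ : β} (hθ₁ : 0 ≤ θ₁) (hθ : θ₁ ≤ θ₂) (hM₂ : 0 ≤ M₂) (hM : M₂ ≤ M₁) :
    F θ₂ M₂ ≤ F θ₁ M₁ :=
  (hFM θ₂ M₂ M₁ (hθ₁.trans hθ) hM₂ hM).trans (hFθ θ₂ θ₁ M₁ hθ₁ hθ (hM₂.trans hM))

namespace clearingMap

variable {n m : ℕ} {x : Fin n → ℝ} {S : Matrix (Fin n) (Fin m) ℝ} {A : Matrix (Fin n) (Fin n) ℝ}
  {pbar : Fin n → ℝ} {γ : Fin n → (Fin n → ℝ) → (Fin m → ℝ) → (Fin m → ℝ)}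
  {F : (Fin m → ℝ) → (Fin n → ℝ) → (Fin m → ℝ)}
  {p₁ p₂ : Fin n → ℝ} {q₁ q₂ : Fin m → ℝ} {M₁ M₂ : Fin n → ℝ}

theorem fst_mono (hS : ∀ i k, 0 ≤ S i k) (hA : ∀ i j, 0 ≤ A i j) (hp : p₂ ≤ p₁) (hq : q₂ ≤ q₁) :
    (clearingMap x S A pbar γ F p₂ q₂ M₂).1 ≤ (clearingMap x S A pbar γ F p₁ q₁ M₁).1 := fun i =>
  min_le_min_left _ <| add_le_add
    (add_le_add_right (dotProduct_le_dotProduct_of_nonneg_left hq (hS i)) _) (ATmul_mono hA hp i)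

theorem snd_mono (hγ₁ : ∀ i, 0 ≤ γ i p₁ q₁) (hγ : ∀ i, γ i p₁ q₁ ≤ γ i p₂ q₂)
    (hFθ : ∀ θ₁ θ₂ M, 0 ≤ θ₂ → θ₂ ≤ θ₁ → 0 ≤ M → F θ₁ M ≤ F θ₂ M)
    (hFM : ∀ θ M₁ M₂, 0 ≤ θ → 0 ≤ M₁ → M₁ ≤ M₂ → F θ M₁ ≤ F θ M₂)
    (hM₂ : 0 ≤ M₂) (hM : M₂ ≤ M₁) :
    (clearingMap x S A pbar γ F p₂ q₂ M₂).2.1 ≤ (clearingMap x S A pbar γ F p₁ q₁ M₁).2.1 :=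
  le_of_antitone_left_of_monotone_right hFθ hFM (fun k => sum_nonneg fun i _ => hγ₁ i k)
    (fun k => sum_le_sum fun i _ => hγ i k) hM₂ hM

theorem snd_snd_mono (hA : ∀ i j, 0 ≤ A i j) (hp : p₂ ≤ p₁) :
    (clearingMap x S A pbar γ F p₂ q₂ M₂).2.2 ≤ (clearingMap x S A pbar γ F p₁ q₁ M₁).2.2 :=
  fun i => max_le_max_right 0 <| sub_le_sub_right (add_le_add_right (ATmul_mono hA hp i) _) _

end clearingMap

theorem stmt2_general {n m : ℕ}
    (x : Fin n → ℝ)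
    (S : Matrix (Fin n) (Fin m) ℝ) (hS : ∀ i k, 0 ≤ S i k)
    (A : Matrix (Fin n) (Fin n) ℝ) (hA : ∀ i j, 0 ≤ A i j ∧ A i j ≤ 1)
    (pbar : Fin n → ℝ)
    (γ : Fin n → (Fin n → ℝ) → (Fin m → ℝ) → (Fin m → ℝ))
    (hγrange : ∀ i p q, (∀ j, 0 ≤ p j ∧ p j ≤ pbar j) → (∀ k, 0 ≤ q k) →
      ∀ k, 0 ≤ γ i p q k ∧ γ i p q k ≤ S i k)
    (hγmono : ∀ i p₁ p₂ q₁ q₂, (∀ j, 0 ≤ p₂ j) → (∀ j, p₂ j ≤ p₁ j) → (∀ j, p₁ j ≤ pbar j) →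
      (∀ k, 0 ≤ q₂ k) → (∀ k, q₂ k ≤ q₁ k) → ∀ k, γ i p₁ q₁ k ≤ γ i p₂ q₂ k)
    (F : (Fin m → ℝ) → (Fin n → ℝ) → (Fin m → ℝ))
    (hFθ : ∀ θ₁ θ₂ M, (∀ k, 0 ≤ θ₂ k) → (∀ k, θ₂ k ≤ θ₁ k) → (∀ i, 0 ≤ M i) →
      ∀ k, F θ₁ M k ≤ F θ₂ M k)
    (hFM : ∀ θ M₁ M₂, (∀ k, 0 ≤ θ k) → (∀ i, 0 ≤ M₁ i) → (∀ i, M₁ i ≤ M₂ i) →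
      ∀ k, F θ M₁ k ≤ F θ M₂ k)
    (p₁ p₂ : Fin n → ℝ) (q₁ q₂ : Fin m → ℝ) (M₁ M₂ : Fin n → ℝ)
    (hp₁ : ∀ i, 0 ≤ p₁ i ∧ p₁ i ≤ pbar i) (hq₁ : ∀ k, 0 ≤ q₁ k)
    (hp₂ : ∀ i, 0 ≤ p₂ i ∧ p₂ i ≤ pbar i) (hq₂ : ∀ k, 0 ≤ q₂ k) (hM₂ : ∀ i, 0 ≤ M₂ i)
    (hp : ∀ i, p₂ i ≤ p₁ i) (hq : ∀ k, q₂ k ≤ q₁ k) (hM : ∀ i, M₂ i ≤ M₁ i) :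
    (∀ i, (clearingMap x S A pbar γ F p₂ q₂ M₂).1 i ≤ (clearingMap x S A pbar γ F p₁ q₁ M₁).1 i) ∧
    (∀ k, (clearingMap x S A pbar γ F p₂ q₂ M₂).2.1 k ≤ (clearingMap x S A pbar γ F p₁ q₁ M₁).2.1 k) ∧
    (∀ i, (clearingMap x S A pbar γ F p₂ q₂ M₂).2.2 i ≤ (clearingMap x S A pbar γ F p₁ q₁ M₁).2.2 i) := by
  have hA₀ : ∀ i j, 0 ≤ A i j := fun i j => (hA i j).1
  have hγ₁ : ∀ i, 0 ≤ γ i p₁ q₁ := fun i k => (hγrange i p₁ q₁ hp₁ hq₁ k).1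
  have hγ : ∀ i, γ i p₁ q₁ ≤ γ i p₂ q₂ :=
    fun i => hγmono i p₁ p₂ q₁ q₂ (fun j => (hp₂ j).1) hp (fun j => (hp₁ j).2) hq₂ hq
  exact ⟨clearingMap.fst_mono hS hA₀ hp hq, clearingMap.snd_mono hγ₁ hγ hFθ hFM hM₂ hM,
    clearingMap.snd_snd_mono hA₀ hp⟩

/-- Under γ-monotonicity and F-monotonicity, the clearing map `Φ` is monotone on
`[0,p̄] × ℝ^m_+ × ℝ^n_+` with respect to the componentwise order. -/
theorem stmt2 {n m : ℕ} (hn : 1 ≤ n) (hm : 1 ≤ m)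
    (x : Fin n → ℝ) (hx : ∀ i, 0 ≤ x i)
    (S : Matrix (Fin n) (Fin m) ℝ) (hS : ∀ i k, 0 ≤ S i k)
    (A : Matrix (Fin n) (Fin n) ℝ) (hA : ∀ i j, 0 ≤ A i j ∧ A i j ≤ 1)
    (pbar : Fin n → ℝ) (hpbar : ∀ i, 0 ≤ pbar i)
    (γ : Fin n → (Fin n → ℝ) → (Fin m → ℝ) → (Fin m → ℝ))
    (hγrange : ∀ i p q, (∀ j, 0 ≤ p j ∧ p j ≤ pbar j) → (∀ k, 0 ≤ q k) →
      ∀ k, 0 ≤ γ i p q k ∧ γ i p q k ≤ S i k)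
    (hγmono : ∀ i p₁ p₂ q₁ q₂, (∀ j, 0 ≤ p₂ j) → (∀ j, p₂ j ≤ p₁ j) → (∀ j, p₁ j ≤ pbar j) →
      (∀ k, 0 ≤ q₂ k) → (∀ k, q₂ k ≤ q₁ k) → ∀ k, γ i p₁ q₁ k ≤ γ i p₂ q₂ k)
    (F : (Fin m → ℝ) → (Fin n → ℝ) → (Fin m → ℝ))
    (hFθ : ∀ θ₁ θ₂ M, (∀ k, 0 ≤ θ₂ k) → (∀ k, θ₂ k ≤ θ₁ k) → (∀ i, 0 ≤ M i) →
      ∀ k, F θ₁ M k ≤ F θ₂ M k)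
    (hFM : ∀ θ M₁ M₂, (∀ k, 0 ≤ θ k) → (∀ i, 0 ≤ M₁ i) → (∀ i, M₁ i ≤ M₂ i) →
      ∀ k, F θ M₁ k ≤ F θ M₂ k)
    (p₁ p₂ : Fin n → ℝ) (q₁ q₂ : Fin m → ℝ) (M₁ M₂ : Fin n → ℝ)
    (hp₁ : ∀ i, 0 ≤ p₁ i ∧ p₁ i ≤ pbar i) (hq₁ : ∀ k, 0 ≤ q₁ k) (hM₁ : ∀ i, 0 ≤ M₁ i)
    (hp₂ : ∀ i, 0 ≤ p₂ i ∧ p₂ i ≤ pbar i) (hq₂ : ∀ k, 0 ≤ q₂ k) (hM₂ : ∀ i, 0 ≤ M₂ i)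
    (hp : ∀ i, p₂ i ≤ p₁ i) (hq : ∀ k, q₂ k ≤ q₁ k) (hM : ∀ i, M₂ i ≤ M₁ i) :
    (∀ i, (clearingMap x S A pbar γ F p₂ q₂ M₂).1 i ≤ (clearingMap x S A pbar γ F p₁ q₁ M₁).1 i) ∧
    (∀ k, (clearingMap x S A pbar γ F p₂ q₂ M₂).2.1 k ≤ (clearingMap x S A pbar γ F p₁ q₁ M₁).2.1 k) ∧
    (∀ i, (clearingMap x S A pbar γ F p₂ q₂ M₂).2.2 i ≤ (clearingMap x S A pbar γ F p₁ q₁ M₁).2.2 i) :=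
  stmt2_general x S hS A hA pbar γ hγrange hγmono F hFθ hFM p₁ p₂ q₁ q₂ M₁ M₂ hp₁ hq₁ hp₂ hq₂ hM₂ hp
    hq hM
end

section
/- Suppose the liquidation functions satisfy γ-monotonicity and the inverse demand function F satisfies F-monotonicity. Then there exist a greatest clearing solution (p↑, q↑, M↑) and a least clearing solution (p↓, q↓, M↓); that is, both triples are clearing solutions and every clearing solution (p, q, M) satisfies (p↓, q↓, M↓) ≤ (p, q, M) ≤ (p↑, q↑, M↑) componentwise. -/
/-!
On the box `0 ≤ (p, q, M) ≤ (p̄, F(0, M̄), M̄)` the clearing map is monotone (`S, A ≥ 0`, and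
the two antitonicities of `γ` and of `F` in the sales cancel) and maps the box into itself.
Every clearing solution lies in the box, since `M = (x + Aᵀp − p̄)⁺ ≤ M̄` and then
`q = F(θ, M) ≤ F(0, M̄)`. The box is a complete lattice, so Tarski's fixed point theorem gives
the least and the greatest clearing solutions.
-/

open Finset

/-- The set of clearing solutions: triples `(p,q,M) ∈ [0,p̄] × ℝ^m_+ × ℝ^n_+`
that are fixed points of the clearing map `Φ`. -/
noncomputable def clearingSet {n m : ℕ} (x : Fin n → ℝ) (S : Matrix (Fin n) (Fin m) ℝ)
    (A : Matrix (Fin n) (Fin n) ℝ) (pbar : Fin n → ℝ)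
    (γ : Fin n → (Fin n → ℝ) → (Fin m → ℝ) → (Fin m → ℝ))
    (F : (Fin m → ℝ) → (Fin n → ℝ) → (Fin m → ℝ)) :
    Set ((Fin n → ℝ) × (Fin m → ℝ) × (Fin n → ℝ)) :=
  {t | (∀ i, 0 ≤ t.1 i ∧ t.1 i ≤ pbar i) ∧ (∀ k, 0 ≤ t.2.1 k) ∧ (∀ i, 0 ≤ t.2.2 i) ∧
    clearingMap x S A pbar γ F t.1 t.2.1 t.2.2 = t}

open Set Function

instance Prod.conditionallyCompleteLattice {α β : Type*} [ConditionallyCompleteLattice α]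
    [ConditionallyCompleteLattice β] : ConditionallyCompleteLattice (α × β) where
  isLUB_csSup _ hn hb := isLUB_prod.mpr
    ⟨isLUB_csSup (hn.image _) (monotone_fst.map_bddAbove hb),
      isLUB_csSup (hn.image _) (monotone_snd.map_bddAbove hb)⟩
  isGLB_csInf _ hn hb := isGLB_prod.mpr
    ⟨isGLB_csInf (hn.image _) (monotone_fst.map_bddBelow hb),
      isGLB_csInf (hn.image _) (monotone_snd.map_bddBelow hb)⟩

theorem exists_isLeast_isGreatest_fixedPoints_inter_Icc {α : Type*}
    [ConditionallyCompleteLattice α] {f : α → α} {a b : α} (hab : a ≤ b)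
    (hmaps : MapsTo f (Icc a b) (Icc a b)) (hmono : MonotoneOn f (Icc a b)) :
    (∃ u, IsLeast (fixedPoints f ∩ Icc a b) u) ∧ ∃ u, IsGreatest (fixedPoints f ∩ Icc a b) u := by
  have : Fact (a ≤ b) := ⟨hab⟩
  let g : Icc a b →o Icc a b := ⟨hmaps.restrict f _ _, fun s t hst => hmono s.2 t.2 hst⟩
  have isFixedPt_iff (t : Icc a b) : g t = t ↔ f t = t := Subtype.ext_iff
  refine ⟨⟨g.lfp, ⟨(isFixedPt_iff _).1 g.map_lfp, g.lfp.2⟩, ?_⟩,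
    ⟨g.gfp, ⟨(isFixedPt_iff _).1 g.map_gfp, g.gfp.2⟩, ?_⟩⟩
  · rintro t ⟨hfix, ht⟩
    exact g.lfp_le_fixed ((isFixedPt_iff ⟨t, ht⟩).2 hfix)
  · rintro t ⟨hfix, ht⟩
    exact g.le_gfp ((isFixedPt_iff ⟨t, ht⟩).2 hfix).ge

section Clearing

variable {n m : ℕ}

theorem ATmul_monotone {A : Matrix (Fin n) (Fin n) ℝ} (hA : ∀ i j, 0 ≤ A i j) :
    Monotone (ATmul A) :=
  fun _ _ hpq i => Finset.sum_le_sum fun j _ => mul_le_mul_of_nonneg_left (hpq j) (hA j i)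

theorem ATmul_nonneg {A : Matrix (Fin n) (Fin n) ℝ} (hA : ∀ i j, 0 ≤ A i j) {p : Fin n → ℝ}
    (hp : 0 ≤ p) : 0 ≤ ATmul A p :=
  fun i => Finset.sum_nonneg fun j _ => mul_nonneg (hA j i) (hp j)

variable (x : Fin n → ℝ) (S : Matrix (Fin n) (Fin m) ℝ) (A : Matrix (Fin n) (Fin n) ℝ)
  (pbar : Fin n → ℝ) (γ : Fin n → (Fin n → ℝ) → (Fin m → ℝ) → (Fin m → ℝ))
  (F : (Fin m → ℝ) → (Fin n → ℝ) → (Fin m → ℝ))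

noncomputable def clearingOp (t : (Fin n → ℝ) × (Fin m → ℝ) × (Fin n → ℝ)) :
    (Fin n → ℝ) × (Fin m → ℝ) × (Fin n → ℝ) :=
  clearingMap x S A pbar γ F t.1 t.2.1 t.2.2

noncomputable def clearingBound : (Fin n → ℝ) × (Fin m → ℝ) × (Fin n → ℝ) :=
  (pbar, F 0 (Mbar x A pbar), Mbar x A pbar)

variable {x S A pbar γ F}

theorem clearingMap_snd_snd_le_Mbar (hA : ∀ i j, 0 ≤ A i j) {p : Fin n → ℝ} {q : Fin m → ℝ}
    {M : Fin n → ℝ} (hp : p ≤ pbar) : (clearingMap x S A pbar γ F p q M).2.2 ≤ Mbar x A pbar :=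
  fun i => max_le_max (by linarith [ATmul_monotone hA hp i]) le_rfl

theorem clearingMap_mem_Icc (hx : 0 ≤ x) (hS : ∀ i k, 0 ≤ S i k) (hA : ∀ i j, 0 ≤ A i j)
    (hpbar : 0 ≤ pbar) (hγ : ∀ i p q, 0 ≤ p → p ≤ pbar → 0 ≤ q → 0 ≤ γ i p q)
    (hFpos : ∀ θ M, 0 ≤ θ → 0 ≤ M → 0 ≤ F θ M)
    (hFθ : ∀ θ₁ θ₂ M, 0 ≤ θ₂ → θ₂ ≤ θ₁ → 0 ≤ M → F θ₁ M ≤ F θ₂ M)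
    (hFM : ∀ θ M₁ M₂, 0 ≤ θ → 0 ≤ M₁ → M₁ ≤ M₂ → F θ M₁ ≤ F θ M₂)
    {p : Fin n → ℝ} {q : Fin m → ℝ} {M : Fin n → ℝ} (hp : 0 ≤ p) (hp' : p ≤ pbar) (hq : 0 ≤ q)
    (hM : 0 ≤ M) (hM' : M ≤ Mbar x A pbar) :
    clearingMap x S A pbar γ F p q M ∈ Icc 0 (clearingBound x A pbar F) := by
  have hθ : 0 ≤ fun k => ∑ i, γ i p q k :=
    fun k => Finset.sum_nonneg fun i _ => hγ i p q hp hp' hq k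
  have hSq (i : Fin n) : 0 ≤ ∑ k, S i k * q k :=
    Finset.sum_nonneg fun k _ => mul_nonneg (hS i k) (hq k)
  refine ⟨⟨fun i => le_min (hpbar i) ?_, hFpos _ _ hθ hM, fun i => le_max_right _ _⟩,
    ⟨fun i => min_le_left _ _, ?_, clearingMap_snd_snd_le_Mbar hA hp'⟩⟩
  · exact add_nonneg (add_nonneg (hx i) (hSq i)) (ATmul_nonneg hA hp i)
  · calc F (fun k => ∑ i, γ i p q k) M ≤ F 0 M := hFθ _ _ _ le_rfl hθ hM
      _ ≤ F 0 (Mbar x A pbar) := hFM _ _ _ le_rfl hM hM'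

theorem clearingMap_mono (hS : ∀ i k, 0 ≤ S i k) (hA : ∀ i j, 0 ≤ A i j)
    (hγ : ∀ i p q, 0 ≤ p → p ≤ pbar → 0 ≤ q → 0 ≤ γ i p q)
    (hγmono : ∀ i p₁ p₂ q₁ q₂, 0 ≤ p₂ → p₂ ≤ p₁ → p₁ ≤ pbar → 0 ≤ q₂ → q₂ ≤ q₁ →
      γ i p₁ q₁ ≤ γ i p₂ q₂)
    (hFθ : ∀ θ₁ θ₂ M, 0 ≤ θ₂ → θ₂ ≤ θ₁ → 0 ≤ M → F θ₁ M ≤ F θ₂ M)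
    (hFM : ∀ θ M₁ M₂, 0 ≤ θ → 0 ≤ M₁ → M₁ ≤ M₂ → F θ M₁ ≤ F θ M₂)
    {p₁ p₂ : Fin n → ℝ} {q₁ q₂ : Fin m → ℝ} {M₁ M₂ : Fin n → ℝ}
    (hp₁ : 0 ≤ p₁) (hp : p₁ ≤ p₂) (hp₂ : p₂ ≤ pbar) (hq₁ : 0 ≤ q₁) (hq : q₁ ≤ q₂)
    (hM₁ : 0 ≤ M₁) (hM : M₁ ≤ M₂) :
    clearingMap x S A pbar γ F p₁ q₁ M₁ ≤ clearingMap x S A pbar γ F p₂ q₂ M₂ := by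
  have hθ₂ : 0 ≤ fun k => ∑ i, γ i p₂ q₂ k :=
    fun k => Finset.sum_nonneg fun i _ => hγ i p₂ q₂ (hp₁.trans hp) hp₂ (hq₁.trans hq) k
  have hθ : (fun k => ∑ i, γ i p₂ q₂ k) ≤ fun k => ∑ i, γ i p₁ q₁ k :=
    fun k => Finset.sum_le_sum fun i _ => hγmono i p₂ p₁ q₂ q₁ hp₁ hp hp₂ hq₁ hq k
  have hAp := ATmul_monotone hA hp
  refine ⟨fun i => min_le_min le_rfl (add_le_add (add_le_add le_rfl ?_) (hAp i)), ?_,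
    fun i => max_le_max (by linarith [hAp i]) le_rfl⟩
  · exact Finset.sum_le_sum fun k _ => mul_le_mul_of_nonneg_left (hq k) (hS i k)
  · calc F (fun k => ∑ i, γ i p₁ q₁ k) M₁ ≤ F (fun k => ∑ i, γ i p₂ q₂ k) M₁ :=
          hFθ _ _ _ hθ₂ hθ hM₁
      _ ≤ F (fun k => ∑ i, γ i p₂ q₂ k) M₂ := hFM _ _ _ hθ₂ hM₁ hM

theorem clearingSet_eq_fixedPoints_inter_Icc (hx : 0 ≤ x) (hS : ∀ i k, 0 ≤ S i k) (hA : ∀ i j, 0 ≤ A i j)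
    (hpbar : 0 ≤ pbar) (hγ : ∀ i p q, 0 ≤ p → p ≤ pbar → 0 ≤ q → 0 ≤ γ i p q)
    (hFpos : ∀ θ M, 0 ≤ θ → 0 ≤ M → 0 ≤ F θ M)
    (hFθ : ∀ θ₁ θ₂ M, 0 ≤ θ₂ → θ₂ ≤ θ₁ → 0 ≤ M → F θ₁ M ≤ F θ₂ M)
    (hFM : ∀ θ M₁ M₂, 0 ≤ θ → 0 ≤ M₁ → M₁ ≤ M₂ → F θ M₁ ≤ F θ M₂) :
    clearingSet x S A pbar γ F =
      fixedPoints (clearingOp x S A pbar γ F) ∩ Icc 0 (clearingBound x A pbar F) := by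
  ext ⟨p, q, M⟩
  constructor
  · rintro ⟨hp, hq, hM, hfix⟩
    have hM' : M ≤ Mbar x A pbar :=
      (congrArg (fun t => t.2.2) hfix).ge.trans
        (clearingMap_snd_snd_le_Mbar hA fun i => (hp i).2)
    exact ⟨hfix, hfix ▸ clearingMap_mem_Icc hx hS hA hpbar hγ hFpos hFθ hFM
      (fun i => (hp i).1) (fun i => (hp i).2) hq hM hM'⟩
  · rintro ⟨hfix, ⟨hp, hq, hM⟩, hp', -⟩
    exact ⟨fun i => ⟨hp i, hp' i⟩, hq, hM, hfix⟩

end Clearing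

theorem stmt5_general {n m : ℕ}
    (x : Fin n → ℝ) (hx : ∀ i, 0 ≤ x i)
    (S : Matrix (Fin n) (Fin m) ℝ) (hS : ∀ i k, 0 ≤ S i k)
    (A : Matrix (Fin n) (Fin n) ℝ) (hA : ∀ i j, 0 ≤ A i j ∧ A i j ≤ 1)
    (pbar : Fin n → ℝ) (hpbar : ∀ i, 0 ≤ pbar i)
    (γ : Fin n → (Fin n → ℝ) → (Fin m → ℝ) → (Fin m → ℝ))
    (hγrange : ∀ i p q, (∀ j, 0 ≤ p j ∧ p j ≤ pbar j) → (∀ k, 0 ≤ q k) →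
      ∀ k, 0 ≤ γ i p q k ∧ γ i p q k ≤ S i k)
    (hγmono : ∀ i p₁ p₂ q₁ q₂, (∀ j, 0 ≤ p₂ j) → (∀ j, p₂ j ≤ p₁ j) → (∀ j, p₁ j ≤ pbar j) →
      (∀ k, 0 ≤ q₂ k) → (∀ k, q₂ k ≤ q₁ k) → ∀ k, γ i p₁ q₁ k ≤ γ i p₂ q₂ k)
    (F : (Fin m → ℝ) → (Fin n → ℝ) → (Fin m → ℝ))
    (hFpos : ∀ θ M, (∀ k, 0 ≤ θ k) → (∀ i, 0 ≤ M i) → ∀ k, 0 ≤ F θ M k)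
    (hFθ : ∀ θ₁ θ₂ M, (∀ k, 0 ≤ θ₂ k) → (∀ k, θ₂ k ≤ θ₁ k) → (∀ i, 0 ≤ M i) →
      ∀ k, F θ₁ M k ≤ F θ₂ M k)
    (hFM : ∀ θ M₁ M₂, (∀ k, 0 ≤ θ k) → (∀ i, 0 ≤ M₁ i) → (∀ i, M₁ i ≤ M₂ i) →
      ∀ k, F θ M₁ k ≤ F θ M₂ k) :
    ∃ tup ∈ clearingSet x S A pbar γ F, ∃ tdown ∈ clearingSet x S A pbar γ F,
      ∀ t ∈ clearingSet x S A pbar γ F, tdown ≤ t ∧ t ≤ tup := by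
  have hA₀ : ∀ i j, 0 ≤ A i j := fun i j => (hA i j).1
  have hγ₀ : ∀ i p q, 0 ≤ p → p ≤ pbar → 0 ≤ q → 0 ≤ γ i p q :=
    fun i p q hp hp' hq k => (hγrange i p q (fun j => ⟨hp j, hp' j⟩) hq k).1
  have hbound : 0 ≤ clearingBound x A pbar F :=
    ⟨hpbar, hFpos 0 _ (fun _ => le_rfl) fun _ => le_max_right _ _, fun _ => le_max_right _ _⟩
  have hmaps : MapsTo (clearingOp x S A pbar γ F) (Icc 0 (clearingBound x A pbar F))
      (Icc 0 (clearingBound x A pbar F)) := fun _ ht =>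
    clearingMap_mem_Icc hx hS hA₀ hpbar hγ₀ hFpos hFθ hFM ht.1.1 ht.2.1 ht.1.2.1 ht.1.2.2 ht.2.2.2
  have hmono : MonotoneOn (clearingOp x S A pbar γ F) (Icc 0 (clearingBound x A pbar F)) :=
    fun _ hs _ ht hst => clearingMap_mono hS hA₀ hγ₀ hγmono hFθ hFM
      hs.1.1 hst.1 ht.2.1 hs.1.2.1 hst.2.1 hs.1.2.2 hst.2.2
  obtain ⟨⟨tdown, hdown⟩, tup, hup⟩ :=
    exists_isLeast_isGreatest_fixedPoints_inter_Icc hbound hmaps hmono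
  rw [clearingSet_eq_fixedPoints_inter_Icc hx hS hA₀ hpbar hγ₀ hFpos hFθ hFM]
  exact ⟨tup, hup.1, tdown, hdown.1, fun t ht => ⟨hdown.2 ht, hup.2 ht⟩⟩

/-- Under γ-monotonicity and F-monotonicity, there exist a greatest clearing solution
`(p↑,q↑,M↑)` and a least clearing solution `(p↓,q↓,M↓)`: both are clearing solutions
and every clearing solution lies between them in the componentwise order. -/
theorem stmt5 {n m : ℕ} (hn : 1 ≤ n) (hm : 1 ≤ m)
    (x : Fin n → ℝ) (hx : ∀ i, 0 ≤ x i)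
    (S : Matrix (Fin n) (Fin m) ℝ) (hS : ∀ i k, 0 ≤ S i k)
    (A : Matrix (Fin n) (Fin n) ℝ) (hA : ∀ i j, 0 ≤ A i j ∧ A i j ≤ 1)
    (pbar : Fin n → ℝ) (hpbar : ∀ i, 0 ≤ pbar i)
    (γ : Fin n → (Fin n → ℝ) → (Fin m → ℝ) → (Fin m → ℝ))
    (hγrange : ∀ i p q, (∀ j, 0 ≤ p j ∧ p j ≤ pbar j) → (∀ k, 0 ≤ q k) →
      ∀ k, 0 ≤ γ i p q k ∧ γ i p q k ≤ S i k)
    (hγmono : ∀ i p₁ p₂ q₁ q₂, (∀ j, 0 ≤ p₂ j) → (∀ j, p₂ j ≤ p₁ j) → (∀ j, p₁ j ≤ pbar j) →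
      (∀ k, 0 ≤ q₂ k) → (∀ k, q₂ k ≤ q₁ k) → ∀ k, γ i p₁ q₁ k ≤ γ i p₂ q₂ k)
    (F : (Fin m → ℝ) → (Fin n → ℝ) → (Fin m → ℝ))
    (hFpos : ∀ θ M, (∀ k, 0 ≤ θ k) → (∀ i, 0 ≤ M i) → ∀ k, 0 ≤ F θ M k)
    (hFθ : ∀ θ₁ θ₂ M, (∀ k, 0 ≤ θ₂ k) → (∀ k, θ₂ k ≤ θ₁ k) → (∀ i, 0 ≤ M i) →
      ∀ k, F θ₁ M k ≤ F θ₂ M k)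
    (hFM : ∀ θ M₁ M₂, (∀ k, 0 ≤ θ k) → (∀ i, 0 ≤ M₁ i) → (∀ i, M₁ i ≤ M₂ i) →
      ∀ k, F θ M₁ k ≤ F θ M₂ k) :
    ∃ tup ∈ clearingSet x S A pbar γ F, ∃ tdown ∈ clearingSet x S A pbar γ F,
      ∀ t ∈ clearingSet x S A pbar γ F, tdown ≤ t ∧ t ≤ tup :=
  stmt5_general x hx S hS A hA pbar hpbar γ hγrange hγmono F hFpos hFθ hFM
end

section
/- The minimal liquidation condition together with proportionality uniquely characterizes the proportional liquidation function: fix a bank i, p ∈ [0,p̄], and q ∈ ℝ^m_+ with q^T s_i > 0. If g ∈ ℝ^m satisfies 0 ≤ g ≤ s_i, the minimal liquidation condition q^T g = min(q^T s_i, (p̄_i − x_i − (A^T p)_i)^+), and the proportionality relations s_{il} g_k = s_{ik} g_l for all assets k, l, then g equals the proportional liquidation γ_i(p,q), i.e. g_k = (s_{ik}/(q^T s_i)) · min(q^T s_i, (p̄_i − x_i − (A^T p)_i)^+) for every asset k. -/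
open Finset

/-- The proportional liquidation function of bank `i`:
`γ_{ik}(p,q) = (s_{ik}/(q^T s_i)) · min(q^T s_i, (p̄_i − x_i − (A^T p)_i)^+)`. -/
noncomputable def propLiq {n m : ℕ} (s : Fin n → Fin m → ℝ) (x : Fin n → ℝ)
    (A : Matrix (Fin n) (Fin n) ℝ) (pbar : Fin n → ℝ)
    (i : Fin n) (p : Fin n → ℝ) (q : Fin m → ℝ) : Fin m → ℝ :=
  fun k => (s i k / ∑ l, q l * s i l) *
    min (∑ l, q l * s i l) (max (pbar i - x i - ATmul A p i) 0)

section Proportional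

variable {ι : Type*} [Fintype ι]

theorem sum_mul_mul_eq_mul_sum_mul_of_proportional {R : Type*} [CommSemiring R] {s g : ι → R}
    (hprop : ∀ k l, s l * g k = s k * g l)
    (q : ι → R) (k : ι) : (∑ l, q l * s l) * g k = s k * ∑ l, q l * g l := by
  rw [sum_mul, mul_sum]
  refine sum_congr rfl fun l _ => ?_
  rw [mul_assoc, hprop k l, mul_left_comm]

theorem eq_div_mul_sum_of_proportional {K : Type*} [Field K] {s g : ι → K}
    (hprop : ∀ k l, s l * g k = s k * g l)
    {q : ι → K} (hqs : ∑ l, q l * s l ≠ 0) (k : ι) :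
    g k = s k / (∑ l, q l * s l) * ∑ l, q l * g l := by
  rw [div_mul_eq_mul_div, eq_div_iff hqs, mul_comm,
    sum_mul_mul_eq_mul_sum_mul_of_proportional hprop]

end Proportional

theorem stmt10_general {n m : ℕ}
    (s : Fin n → Fin m → ℝ)
    (x : Fin n → ℝ)
    (A : Matrix (Fin n) (Fin n) ℝ)
    (pbar : Fin n → ℝ)
    (i : Fin n) (p : Fin n → ℝ)
    (q : Fin m → ℝ) (hqs : 0 < ∑ l, q l * s i l)
    (g : Fin m → ℝ)
    (hgmin : ∑ k, q k * g k =
      min (∑ l, q l * s i l) (max (pbar i - x i - ATmul A p i) 0))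
    (hgprop : ∀ k l, s i l * g k = s i k * g l) :
    ∀ k, g k = (s i k / ∑ l, q l * s i l) *
      min (∑ l, q l * s i l) (max (pbar i - x i - ATmul A p i) 0) := by
  intro k
  rw [← hgmin]
  exact eq_div_mul_sum_of_proportional hgprop hqs.ne' k

/-- The minimal liquidation condition together with proportionality uniquely
characterizes the proportional liquidation function. -/
theorem stmt10 {n m : ℕ}
    (s : Fin n → Fin m → ℝ) (hs : ∀ i k, 0 ≤ s i k)
    (x : Fin n → ℝ) (hx : ∀ i, 0 ≤ x i)
    (A : Matrix (Fin n) (Fin n) ℝ) (hA : ∀ i j, 0 ≤ A i j ∧ A i j ≤ 1)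
    (pbar : Fin n → ℝ) (hpbar : ∀ i, 0 ≤ pbar i)
    (i : Fin n) (p : Fin n → ℝ) (hp : ∀ j, 0 ≤ p j ∧ p j ≤ pbar j)
    (q : Fin m → ℝ) (hq : ∀ k, 0 ≤ q k) (hqs : 0 < ∑ l, q l * s i l)
    (g : Fin m → ℝ) (hg : ∀ k, 0 ≤ g k ∧ g k ≤ s i k)
    (hgmin : ∑ k, q k * g k =
      min (∑ l, q l * s i l) (max (pbar i - x i - ATmul A p i) 0))
    (hgprop : ∀ k l, s i l * g k = s i k * g l) :
    ∀ k, g k = (s i k / ∑ l, q l * s i l) *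
      min (∑ l, q l * s i l) (max (pbar i - x i - ATmul A p i) 0) :=
  stmt10_general s x A pbar i p q hqs g hgmin hgprop
end

section
/- The proportional liquidation function is monotonically nonincreasing: for every bank i, if p¹, p² ∈ [0,p̄] and q¹, q² ∈ ℝ^m_+ satisfy p¹ ≥ p², q¹ ≥ q² (componentwise) and q²^T s_i > 0, then γ_i(p¹,q¹) ≤ γ_i(p²,q²) componentwise. -/
open Finset

theorem min_div_self_le_min_div_self {α : Type*} [Semifield α] [LinearOrder α]
    [IsStrictOrderedRing α] {a b c d : α} (hd : 0 ≤ d) (hcd : c ≤ d) (hb : 0 < b) (hba : b ≤ a) :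
    min a c / a ≤ min b d / b := by
  have ha : 0 < a := hb.trans_le hba
  rw [← min_div_div_right ha.le, ← min_div_div_right hb.le, div_self ha.ne', div_self hb.ne']
  exact min_le_min_left 1 (div_le_div₀ hd hcd hb hba)

theorem stmt11_general {n m : ℕ}
    (s : Fin n → Fin m → ℝ) (hs : ∀ i k, 0 ≤ s i k)
    (x : Fin n → ℝ)
    (A : Matrix (Fin n) (Fin n) ℝ) (hA : ∀ i j, 0 ≤ A i j ∧ A i j ≤ 1)
    (pbar : Fin n → ℝ)
    (i : Fin n) (p₁ p₂ : Fin n → ℝ)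
    (hp : ∀ j, p₂ j ≤ p₁ j)
    (q₁ q₂ : Fin m → ℝ) (hq : ∀ k, q₂ k ≤ q₁ k)
    (hq₂s : 0 < ∑ l, q₂ l * s i l) :
    ∀ k, propLiq s x A pbar i p₁ q₁ k ≤ propLiq s x A pbar i p₂ q₂ k := by
  intro k
  have hvalue : ∑ l, q₂ l * s i l ≤ ∑ l, q₁ l * s i l :=
    Finset.sum_le_sum fun l _ => mul_le_mul_of_nonneg_right (hq l) (hs i l)
  have hshortfall : pbar i - x i - ATmul A p₁ i ≤ pbar i - x i - ATmul A p₂ i :=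
    sub_le_sub_left (ATmul_mono (fun i j => (hA i j).1) hp i) _
  simp only [propLiq, div_mul_eq_mul_div, mul_div_assoc]
  exact mul_le_mul_of_nonneg_left
    (min_div_self_le_min_div_self (le_max_right _ _) (max_le_max_right 0 hshortfall) hq₂s hvalue)
    (hs i k)

/-- The proportional liquidation function is monotonically nonincreasing:
`p¹ ≥ p²`, `q¹ ≥ q² ≥ 0` (with `q²ᵀ s_i > 0`) implies `γ_i(p¹,q¹) ≤ γ_i(p²,q²)`. -/
theorem stmt11 {n m : ℕ}
    (s : Fin n → Fin m → ℝ) (hs : ∀ i k, 0 ≤ s i k)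
    (x : Fin n → ℝ) (hx : ∀ i, 0 ≤ x i)
    (A : Matrix (Fin n) (Fin n) ℝ) (hA : ∀ i j, 0 ≤ A i j ∧ A i j ≤ 1)
    (pbar : Fin n → ℝ) (hpbar : ∀ i, 0 ≤ pbar i)
    (i : Fin n) (p₁ p₂ : Fin n → ℝ)
    (hp₂0 : ∀ j, 0 ≤ p₂ j) (hp : ∀ j, p₂ j ≤ p₁ j) (hp₁ : ∀ j, p₁ j ≤ pbar j)
    (q₁ q₂ : Fin m → ℝ) (hq₂0 : ∀ k, 0 ≤ q₂ k) (hq : ∀ k, q₂ k ≤ q₁ k)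
    (hq₂s : 0 < ∑ l, q₂ l * s i l) :
    ∀ k, propLiq s x A pbar i p₁ q₁ k ≤ propLiq s x A pbar i p₂ q₂ k :=
  stmt11_general s hs x A hA pbar i p₁ p₂ hp q₁ q₂ hq hq₂s
end

section
/- The liquidity-adjusted linear inverse demand function F satisfies the monotonicity assumptions — namely F(θ¹,M) ≤ F(θ²,M) whenever θ¹ ≥ θ² ≥ 0 for every M ∈ ℝ^n_+, and F(θ,M¹) ≤ F(θ,M²) whenever 0 ≤ M¹ ≤ M² for every θ ∈ ℝ^m_+ — if and only if C_{kl} ≥ 0 for every pair of assets (k,l). -/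
/-!
The liquidity factor `(1/α₀ + ∑_{i ∈ 𝓜(M)} 1/α_i)⁻¹` is positive and, since `𝓜(M)` grows with `M`,
antitone in `M`. So for `C ≥ 0` the price impact `factor • Cθ` grows with `θ` and shrinks as `M`
grows. Conversely, comparing `θ = e_l` with `θ = 0` leaves `C_{kl}` times the positive factor.
-/

open Finset

/-- The liquidity-adjusted linear inverse demand function
`F(θ,M) = μ − (1/α₀ + ∑_{i ∈ 𝓜(M)} 1/α_i)⁻¹ C θ`, where `𝓜(M) = {i : M_i > 0}`
is the set of market makers. -/
noncomputable def linF {n m : ℕ} (μ : Fin m → ℝ) (C : Matrix (Fin m) (Fin m) ℝ)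
    (α0 : ℝ) (α : Fin n → ℝ) (θ : Fin m → ℝ) (M : Fin n → ℝ) : Fin m → ℝ :=
  fun k => μ k - (1 / α0 + ∑ i ∈ Finset.univ.filter (fun i => 0 < M i), 1 / α i)⁻¹ *
    ∑ l, C k l * θ l

section LiquidityFactor

variable {ι : Type*} {α0 : ℝ} {α : ι → ℝ}

lemma one_div_add_sum_one_div_pos (hα0 : 0 < α0) (hα : ∀ i, 0 ≤ α i) (s : Finset ι) :
    0 < 1 / α0 + ∑ i ∈ s, 1 / α i :=
  add_pos_of_pos_of_nonneg (one_div_pos.2 hα0) (sum_nonneg fun i _ => one_div_nonneg.2 (hα i))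

lemma one_div_add_sum_one_div_mono (hα : ∀ i, 0 ≤ α i) {s t : Finset ι} (hst : s ⊆ t) :
    1 / α0 + ∑ i ∈ s, 1 / α i ≤ 1 / α0 + ∑ i ∈ t, 1 / α i :=
  add_le_add_right (sum_le_sum_of_subset_of_nonneg hst fun i _ _ => one_div_nonneg.2 (hα i)) _

end LiquidityFactor

section LinF

variable {n m : ℕ} {μ : Fin m → ℝ} {C : Matrix (Fin m) (Fin m) ℝ} {α0 : ℝ} {α : Fin n → ℝ}

lemma linF_le_linF_of_le (hα0 : 0 < α0) (hα : ∀ i, 0 ≤ α i) (hC : ∀ k l, 0 ≤ C k l)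
    {θ₁ θ₂ : Fin m → ℝ} (hθ : θ₂ ≤ θ₁) (M : Fin n → ℝ) (k : Fin m) :
    linF μ C α0 α θ₁ M k ≤ linF μ C α0 α θ₂ M k := by
  have hfactor := one_div_add_sum_one_div_pos hα0 hα (univ.filter fun i => 0 < M i)
  unfold linF
  gcongr with l
  · exact hC k l
  · exact hθ l

lemma linF_le_linF_of_market_le (hα0 : 0 < α0) (hα : ∀ i, 0 ≤ α i) (hC : ∀ k l, 0 ≤ C k l)
    {θ : Fin m → ℝ} (hθ : 0 ≤ θ) {M₁ M₂ : Fin n → ℝ} (hM : M₁ ≤ M₂) (k : Fin m) :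
    linF μ C α0 α θ M₁ k ≤ linF μ C α0 α θ M₂ k := by
  have hS : 0 ≤ ∑ l, C k l * θ l := sum_nonneg fun l _ => mul_nonneg (hC k l) (hθ l)
  have hmakers : univ.filter (fun i => 0 < M₁ i) ⊆ univ.filter (fun i => 0 < M₂ i) :=
    monotone_filter_right _ fun i _ h => lt_of_lt_of_le h (hM i)
  have hfactor := one_div_add_sum_one_div_mono (α0 := α0) hα hmakers
  unfold linF
  gcongr
  exact one_div_add_sum_one_div_pos hα0 hα _

lemma nonneg_of_linF_single_le_linF_zero (hα0 : 0 < α0) (hα : ∀ i, 0 ≤ α i)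
    {M : Fin n → ℝ} {k l : Fin m}
    (h : linF μ C α0 α (Pi.single l 1) M k ≤ linF μ C α0 α 0 M k) : 0 ≤ C k l := by
  simp only [linF, Pi.single_apply, mul_ite, mul_one, mul_zero, sum_ite_eq', mem_univ,
    if_true, Pi.zero_apply, sum_const_zero, sub_zero, sub_le_self_iff] at h
  exact nonneg_of_mul_nonneg_right h (inv_pos.2 (one_div_add_sum_one_div_pos hα0 hα _))

end LinF

theorem stmt12_general {n m : ℕ}
    (μ : Fin m → ℝ) (C : Matrix (Fin m) (Fin m) ℝ)
    (α0 : ℝ) (hα0 : 0 < α0) (α : Fin n → ℝ) (hα : ∀ i, 0 < α i) :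
    ((∀ θ₁ θ₂ M, (∀ l, 0 ≤ θ₂ l) → (∀ l, θ₂ l ≤ θ₁ l) → (∀ i, 0 ≤ M i) →
        ∀ k, linF μ C α0 α θ₁ M k ≤ linF μ C α0 α θ₂ M k) ∧
     (∀ θ M₁ M₂, (∀ l, 0 ≤ θ l) → (∀ i, 0 ≤ M₁ i) → (∀ i, M₁ i ≤ M₂ i) →
        ∀ k, linF μ C α0 α θ M₁ k ≤ linF μ C α0 α θ M₂ k)) ↔
    (∀ k l, 0 ≤ C k l) := by
  have hα' : ∀ i, 0 ≤ α i := fun i => (hα i).le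
  constructor
  · rintro ⟨hθ, -⟩ k l
    exact nonneg_of_linF_single_le_linF_zero hα0 hα' (μ := μ)
      (hθ _ 0 0 (fun _ => le_rfl) (Pi.single_nonneg.2 zero_le_one) (fun _ => le_rfl) k)
  · intro hC
    exact ⟨fun θ₁ θ₂ M _ hθ _ => linF_le_linF_of_le hα0 hα' hC hθ M,
      fun θ M₁ M₂ hθ _ hM => linF_le_linF_of_market_le hα0 hα' hC hθ hM⟩

/-- The liquidity-adjusted linear inverse demand function satisfies the monotonicity
assumptions (nonincreasing in liquidations on `ℝ^m_+`, nondecreasing in market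
liquidity on `ℝ^n_+`) if and only if `C_{kl} ≥ 0` for every pair of assets `(k,l)`. -/
theorem stmt12 {n m : ℕ} (hm : 1 ≤ m)
    (μ : Fin m → ℝ) (C : Matrix (Fin m) (Fin m) ℝ)
    (α0 : ℝ) (hα0 : 0 < α0) (α : Fin n → ℝ) (hα : ∀ i, 0 < α i) :
    ((∀ θ₁ θ₂ M, (∀ l, 0 ≤ θ₂ l) → (∀ l, θ₂ l ≤ θ₁ l) → (∀ i, 0 ≤ M i) →
        ∀ k, linF μ C α0 α θ₁ M k ≤ linF μ C α0 α θ₂ M k) ∧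
     (∀ θ M₁ M₂, (∀ l, 0 ≤ θ l) → (∀ i, 0 ≤ M₁ i) → (∀ i, M₁ i ≤ M₂ i) →
        ∀ k, linF μ C α0 α θ M₁ k ≤ linF μ C α0 α θ M₂ k)) ↔
    (∀ k l, 0 ≤ C k l) :=
  stmt12_general μ C α0 hα0 α hα
end

section
/- The two-bank system admits at least two distinct clearing solutions: there exist fixed points (p, q, M) and (p', q', M') of the clearing map Φ, with p, p' ∈ [0,p̄], q, q' ≥ 0, M, M' ≥ 0, such that q ≠ q'. In particular, clearing solutions of this system are not unique. -/
open Finset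

/-- Liquid endowments `x = (0, 1/1000)`. -/
noncomputable def x2 : Fin 2 → ℝ := ![0, 1/1000]

/-- Illiquid holdings `s = (2.35, 2)`. -/
noncomputable def s2 : Fin 2 → ℝ := ![2.35, 2]

/-- Total liabilities `p̄ = (2, 1)`. -/
noncomputable def pbar2 : Fin 2 → ℝ := ![2, 1]

/-- Interbank payments received: `(A^T p)_1 = 0` and `(A^T p)_2 = p_1/2`
(bank 2 receives half of bank 1's payment). -/
noncomputable def ATp2 (p : Fin 2 → ℝ) : Fin 2 → ℝ := ![0, p 0 / 2]

/-- The minimal liquidation rule `γ_i(p,q) = min(s_i, (p̄_i − x_i − (A^T p)_i)^+ / q)`. -/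
noncomputable def gamma2 (i : Fin 2) (p : Fin 2 → ℝ) (q : ℝ) : ℝ :=
  min (s2 i) (max (pbar2 i - x2 i - ATp2 p i) 0 / q)

/-- The inverse demand function `F(θ,M) = 1 − θ/(15 + #{i : M_i > 0})`. -/
noncomputable def F2 (θ : ℝ) (M : Fin 2 → ℝ) : ℝ :=
  1 - θ / (15 + ((Finset.univ.filter fun i => 0 < M i).card : ℝ))

/-- The clearing map of the two-bank system. -/
noncomputable def Phi2 (p : Fin 2 → ℝ) (q : ℝ) (M : Fin 2 → ℝ) :
    (Fin 2 → ℝ) × ℝ × (Fin 2 → ℝ) :=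
  (fun i => min (pbar2 i) (x2 i + s2 i * q + ATp2 p i),
   F2 (gamma2 0 p q + gamma2 1 p q) M,
   fun i => max (x2 i + ATp2 p i - pbar2 i) 0)

/-! Bank 1 is solvent exactly when selling its whole holding covers its debt, i.e. when
`q ≥ p̄₁ / s₁ = 40/47`. If it pays in full, bank 2 ends with a surplus and only bank 1 sells
`2/q`, so the price solves `q = 1 - (2/q)/16`, with root `(2 + √2)/4` above the threshold.
If bank 1 defaults, it pays `47q/20`, bank 2 must sell as well, nobody has a surplus and the
price solves `q = 1 - (47/20 + (999/1000 - 47q/40)/q)/15`, with root `(553 + √209905)/1200`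
below the threshold. These are two clearing solutions with different prices. -/

lemma gamma2_zero (p : Fin 2 → ℝ) (q : ℝ) : gamma2 0 p q = min (47 / 20) (2 / q) := by
  norm_num [gamma2, s2, pbar2, x2, ATp2]

lemma gamma2_one (p : Fin 2 → ℝ) (q : ℝ) :
    gamma2 1 p q = min 2 (max (999 / 1000 - p 0 / 2) 0 / q) := by
  norm_num [gamma2, s2, pbar2, x2, ATp2]

lemma Phi2_solvent {q : ℝ} (hq : 40 / 47 ≤ q) (hroot : 8 * q ^ 2 - 8 * q + 1 = 0) :
    Phi2 ![2, 1] q ![0, 1 / 1000] = (![2, 1], q, ![0, 1 / 1000]) := by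
  have hq0 : 0 < q := by linarith
  have hcard : (univ.filter fun i => 0 < (![0, 1 / 1000] : Fin 2 → ℝ) i) = {1} := by
    ext i; fin_cases i <;> norm_num
  simp only [Phi2, Prod.mk.injEq]
  refine ⟨funext fun i => ?_, ?_, funext fun i => ?_⟩
  · fin_cases i <;> norm_num [x2, s2, pbar2, ATp2] <;> linarith
  · rw [F2, gamma2_zero, gamma2_one, hcard, min_eq_right ((div_le_iff₀ hq0).2 (by linarith))]
    norm_num
    field_simp
    linarith
  · fin_cases i <;> norm_num [x2, pbar2, ATp2]

lemma Phi2_default {q : ℝ} (hq₀ : 1 / 3 ≤ q) (hq : q ≤ 17 / 20)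
    (hroot : 15000 * q ^ 2 - 13825 * q + 999 = 0) :
    Phi2 ![47 / 20 * q, 1] q 0 = (![47 / 20 * q, 1], q, 0) := by
  have hq0 : 0 < q := by linarith
  have hcard : (univ.filter fun i => 0 < (0 : Fin 2 → ℝ) i) = ∅ := by
    ext i; simp
  simp only [Phi2, Prod.mk.injEq]
  refine ⟨funext fun i => ?_, ?_, funext fun i => ?_⟩
  · fin_cases i <;> norm_num [x2, s2, pbar2, ATp2] <;> linarith
  · rw [F2, gamma2_zero, gamma2_one, hcard,
      min_eq_left ((le_div_iff₀ hq0).2 (by linarith)),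
      max_eq_left (by norm_num; linarith),
      min_eq_right ((div_le_iff₀ hq0).2 (by norm_num; linarith))]
    norm_num
    field_simp
    linarith
  · fin_cases i <;> norm_num [x2, pbar2, ATp2]
    linarith

noncomputable def qSolvent : ℝ := (2 + √2) / 4

noncomputable def qDefault : ℝ := (553 + √209905) / 1200

lemma qSolvent_root : 8 * qSolvent ^ 2 - 8 * qSolvent + 1 = 0 := by
  have := Real.sq_sqrt (show (0 : ℝ) ≤ 2 by norm_num)
  unfold qSolvent
  linear_combination this / 2

lemma qDefault_root : 15000 * qDefault ^ 2 - 13825 * qDefault + 999 = 0 := by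
  have := Real.sq_sqrt (show (0 : ℝ) ≤ 209905 by norm_num)
  unfold qDefault
  linear_combination this / 96

lemma qSolvent_ge : 40 / 47 ≤ qSolvent := by
  have : (1.41 : ℝ) ≤ √2 := Real.le_sqrt_of_sq_le (by norm_num)
  unfold qSolvent
  linarith

lemma qDefault_mem_Icc : qDefault ∈ Set.Icc (1 / 3) (17 / 20) := by
  have h₀ : (458 : ℝ) ≤ √209905 := Real.le_sqrt_of_sq_le (by norm_num)
  have h₁ : √209905 ≤ 459 := (Real.sqrt_le_left (by norm_num)).2 (by norm_num)
  unfold qDefault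
  constructor <;> linarith

/-- The two-bank system admits at least two distinct clearing solutions (with
different clearing prices); in particular, clearing solutions are not unique. -/
theorem stmt15 :
    ∃ (p p' : Fin 2 → ℝ) (q q' : ℝ) (M M' : Fin 2 → ℝ),
      (∀ i, 0 ≤ p i ∧ p i ≤ pbar2 i) ∧ 0 ≤ q ∧ (∀ i, 0 ≤ M i) ∧
      (∀ i, 0 ≤ p' i ∧ p' i ≤ pbar2 i) ∧ 0 ≤ q' ∧ (∀ i, 0 ≤ M' i) ∧
      Phi2 p q M = (p, q, M) ∧ Phi2 p' q' M' = (p', q', M') ∧ q ≠ q' := by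
  have hS := qSolvent_ge
  obtain ⟨hD₀, hD₁⟩ := qDefault_mem_Icc
  refine ⟨![2, 1], ![47 / 20 * qDefault, 1], qSolvent, qDefault, ![0, 1 / 1000], 0,
    fun i => ?_, by linarith, fun i => ?_, fun i => ?_, by linarith, fun _ => le_rfl,
    Phi2_solvent hS qSolvent_root, Phi2_default hD₀ hD₁ qDefault_root,
    (by linarith : qDefault < qSolvent).ne'⟩
  all_goals fin_cases i <;> norm_num [pbar2]
  all_goals constructor <;> linarith
end
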